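/- arXiv:0907.0302 — 2 statements merged into one kernel-verified Lean document; each statement's English description precedes it below -/
import Mathlib

section
/- Let R be a commutative ring, δ ⊆ ℕ^n a finite standard set, and ≺ a monomial order on ℕ^n. Suppose for each corner α ∈ 𝒞(δ) we are given a monic polynomial f_α ∈ R[x_1,…,x_n] with leading exponent α (with respect to ≺) all of whose non-leading exponents lie in δ. Let I be the ideal generated by the f_α. Then for every α ∈ ℕ^n \ δ there exists a polynomial g_α ∈ I of the form g_α = x^α + Σ_{β ∈ δ} c_β x^β. -/
/-- A monomial order on ℕ^n (exponents as finitely supported functions): a total,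
transitive, irreflexive order compatible with addition in which 0 is minimal. -/
structure MonOrd (n : ℕ) where
  lt : (Fin n →₀ ℕ) → (Fin n →₀ ℕ) → Prop
  lt_trans : ∀ {a b c}, lt a b → lt b c → lt a c
  lt_irrefl : ∀ a, ¬ lt a a
  lt_total : ∀ a b, lt a b ∨ a = b ∨ lt b a
  add_right : ∀ {a b} (c), lt a b → lt (a + c) (b + c)
  zero_min : ∀ a, a ≠ 0 → lt 0 a

/-- A standard set in ℕ^n: its complement is closed under addition of elements of ℕ^n. -/
def StdSet {n : ℕ} (δ : Set (Fin n →₀ ℕ)) : Prop :=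
  ∀ α ∉ δ, ∀ γ : Fin n →₀ ℕ, α + γ ∉ δ

/-- A corner of δ: an element outside δ all of whose predecessors (when they exist in ℕ^n)
lie in δ. -/
def StdCorner {n : ℕ} (δ : Set (Fin n →₀ ℕ)) (α : Fin n →₀ ℕ) : Prop :=
  α ∉ δ ∧ ∀ (i : Fin n) (β : Fin n →₀ ℕ), β + Finsupp.single i 1 = α → β ∈ δ

/-- The border of δ: elements outside δ of the form β + e_i with β ∈ δ. -/
def StdBorder {n : ℕ} (δ : Set (Fin n →₀ ℕ)) : Set (Fin n →₀ ℕ) :=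
  {α | α ∉ δ ∧ ∃ (i : Fin n), ∃ β ∈ δ, β + Finsupp.single i 1 = α}

/-- `α` is the leading exponent of `g` with respect to the monomial order `mo`. -/
def IsLeadingExp {R : Type*} [CommRing R] {n : ℕ} (mo : MonOrd n)
    (g : MvPolynomial (Fin n) R) (α : Fin n →₀ ℕ) : Prop :=
  g.coeff α ≠ 0 ∧ ∀ β ∈ g.support, β ≠ α → mo.lt β α

/-- `f` (restricted to the corners of δ) is the reduced Gröbner basis of the monic ideal `I`
with standard set δ: the leading exponents of nonzero elements of `I` are exactly the
complement of δ, each `f α` (α a corner) is a monic element of `I` with leading exponent α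
whose non-leading exponents lie in δ (hence are ≺ α), and the `f α` generate `I`. -/
def IsReducedGB {R : Type*} [CommRing R] {n : ℕ} (mo : MonOrd n) (δ : Set (Fin n →₀ ℕ))
    (I : Ideal (MvPolynomial (Fin n) R)) (f : (Fin n →₀ ℕ) → MvPolynomial (Fin n) R) : Prop :=
  (∀ α, (∃ g ∈ I, g ≠ 0 ∧ IsLeadingExp mo g α) ↔ α ∉ δ) ∧
  (∀ α, StdCorner δ α → f α ∈ I ∧ (f α).coeff α = 1 ∧
    ∀ β ∈ (f α).support, β ≠ α → β ∈ δ ∧ mo.lt β α) ∧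
  I = Ideal.span {p | ∃ α, StdCorner δ α ∧ p = f α}

/-!
Induct on α along the monomial order, which is well founded by Dickson's lemma. Every α ∉ δ
is c + γ for a corner c, so x^γ f_c ∈ I is monic with leading exponent α. Each of its other
exponents outside δ is ≺ α, hence by induction the leading exponent of a reduced element of I;
subtracting the matching multiples of those elements leaves only exponents in δ besides α.
-/

open MvPolynomial

namespace MonOrd

variable {n : ℕ} (mo : MonOrd n)

theorem not_lt_of_le {a b : Fin n →₀ ℕ} (hab : a ≤ b) : ¬ mo.lt b a := by
  obtain ⟨γ, rfl⟩ := le_iff_exists_add.mp hab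
  intro hlt
  rcases eq_or_ne γ 0 with rfl | hγ
  · exact mo.lt_irrefl a (by simpa using hlt)
  · have hgt : mo.lt a (a + γ) := by
      simpa [add_comm] using mo.add_right a (mo.zero_min γ hγ)
    exact mo.lt_irrefl a (mo.lt_trans hgt hlt)

theorem wellFounded : WellFounded mo.lt := by
  have : IsStrictOrder (Fin n →₀ ℕ) mo.lt :=
    { irrefl := mo.lt_irrefl, trans := fun _ _ _ => mo.lt_trans }
  rw [RelEmbedding.wellFounded_iff_isEmpty]
  refine ⟨fun f => ?_⟩
  obtain ⟨m, k, hmk, hle⟩ := wellQuasiOrdered_le f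
  exact mo.not_lt_of_le hle (f.map_rel_iff.2 hmk)

theorem lt_of_mem_support_mul_monomial {R : Type*} [CommSemiring R]
    {p : MvPolynomial (Fin n) R} {α : Fin n →₀ ℕ} (hp : ∀ β ∈ p.support, β ≠ α → mo.lt β α)
    (γ : Fin n →₀ ℕ) (r : R) :
    ∀ β ∈ (p * monomial γ r).support, β ≠ α + γ → mo.lt β (α + γ) := by
  classical
  intro β hβ hne
  obtain ⟨β', hβ', γ', hγ', rfl⟩ := Finset.mem_add.mp (support_mul _ _ hβ)
  obtain rfl : γ' = γ := by
    rw [support_monomial] at hγ'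
    split_ifs at hγ' <;> simp_all
  exact mo.add_right γ' (hp β' hβ' fun h => hne (h ▸ rfl))

end MonOrd

theorem exists_stdCorner_add {n : ℕ} {δ : Set (Fin n →₀ ℕ)} {α : Fin n →₀ ℕ} (hα : α ∉ δ) :
    ∃ c γ, StdCorner δ c ∧ c + γ = α := by
  obtain ⟨c, ⟨hcα, hcδ⟩, hmin⟩ :=
    wellFounded_lt.has_min {c | c ≤ α ∧ c ∉ δ} ⟨α, le_rfl, hα⟩
  refine ⟨c, α - c, ⟨hcδ, fun i β hβ => ?_⟩, add_tsub_cancel_of_le hcα⟩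
  have hβc : β < c := hβ ▸ lt_add_of_pos_right β (pos_iff_ne_zero.mpr (by simp))
  by_contra hβδ
  exact hmin β ⟨hβc.le.trans hcα, hβδ⟩ hβc

section Reduction

variable {R : Type*} [CommRing R] {σ : Type*}

def IsReducedAt (δ : Set (σ →₀ ℕ)) (g : MvPolynomial σ R) (α : σ →₀ ℕ) : Prop :=
  g.coeff α = 1 ∧ ∀ β ∈ g.support, β ≠ α → β ∈ δ

variable {δ : Set (σ →₀ ℕ)}

theorem IsReducedAt.coeff_of_notMem [DecidableEq (σ →₀ ℕ)] {g : MvPolynomial σ R}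
    {α ζ : σ →₀ ℕ} (hg : IsReducedAt δ g α) (hζ : ζ ∉ δ) :
    g.coeff ζ = if ζ = α then 1 else 0 := by
  split_ifs with h
  · exact h ▸ hg.1
  · by_contra hne
    exact hζ (hg.2 ζ (mem_support_iff.mpr hne) h)

theorem coeff_sum_C_mul_of_isReducedAt [DecidableEq (σ →₀ ℕ)] {S : Finset (σ →₀ ℕ)}
    {h : (σ →₀ ℕ) → MvPolynomial σ R} (hh : ∀ β ∈ S, IsReducedAt δ (h β) β)
    (a : (σ →₀ ℕ) → R) {ζ : σ →₀ ℕ} (hζ : ζ ∉ δ) :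
    (∑ β ∈ S, C (a β) * h β).coeff ζ = if ζ ∈ S then a ζ else 0 := by
  rw [coeff_sum, ← Finset.sum_ite_eq S ζ a]
  refine Finset.sum_congr rfl fun β hβ => ?_
  rw [coeff_C_mul, (hh β hβ).coeff_of_notMem hζ, mul_ite, mul_one, mul_zero]

theorem exists_isReducedAt_of_mem {I : Ideal (MvPolynomial σ R)} {p : MvPolynomial σ R}
    {α : σ →₀ ℕ} (hαδ : α ∉ δ) (hpI : p ∈ I) (hpα : p.coeff α = 1)
    (hred : ∀ β ∈ p.support, β ∉ δ → β ≠ α → ∃ g ∈ I, IsReducedAt δ g β) :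
    ∃ g ∈ I, IsReducedAt δ g α := by
  classical
  set S := p.support.filter fun β => β ∉ δ ∧ β ≠ α
  have hS : ∀ β ∈ S, ∃ g ∈ I, IsReducedAt δ g β := fun β hβ => by
    obtain ⟨hβp, hβδ, hβα⟩ := Finset.mem_filter.mp hβ
    exact hred β hβp hβδ hβα
  choose! h hhI hh using hS
  refine ⟨p - ∑ β ∈ S, C (p.coeff β) * h β,
    sub_mem hpI (sum_mem fun β hβ => I.mul_mem_left _ (hhI β hβ)), ?_, fun ζ hζ hζα => ?_⟩
  · rw [coeff_sub, coeff_sum_C_mul_of_isReducedAt hh _ hαδ, hpα,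
      if_neg fun h => (Finset.mem_filter.mp h).2.2 rfl, sub_zero]
  · by_contra hζδ
    apply mem_support_iff.mp hζ
    rw [coeff_sub, coeff_sum_C_mul_of_isReducedAt hh _ hζδ]
    split_ifs with hζS
    · exact sub_self _
    · rw [sub_zero]
      by_contra hne
      exact hζS (Finset.mem_filter.mpr ⟨mem_support_iff.mpr hne, hζδ, hζα⟩)

end Reduction

theorem stmt5_general {R : Type*} [CommRing R] {n : ℕ} (mo : MonOrd n)
    (δ : Set (Fin n →₀ ℕ))
    (f : (Fin n →₀ ℕ) → MvPolynomial (Fin n) R)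
    (hf : ∀ α, StdCorner δ α → (f α).coeff α = 1 ∧
      ∀ β ∈ (f α).support, β ≠ α → β ∈ δ ∧ mo.lt β α)
    (I : Ideal (MvPolynomial (Fin n) R))
    (hI : I = Ideal.span {p | ∃ α, StdCorner δ α ∧ p = f α}) :
    ∀ α ∉ δ, ∃ g ∈ I, (g : MvPolynomial (Fin n) R).coeff α = 1 ∧
      ∀ β ∈ (g : MvPolynomial (Fin n) R).support, β ≠ α → β ∈ δ := by
  intro α
  induction α using mo.wellFounded.induction with
  | _ α ih =>
  intro hα
  obtain ⟨c, γ, hc, rfl⟩ := exists_stdCorner_add hα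
  have hfcI : f c ∈ I := hI ▸ Ideal.subset_span ⟨c, hc, rfl⟩
  have hlt := mo.lt_of_mem_support_mul_monomial (fun β hβ hne => ((hf c hc).2 β hβ hne).2) γ 1
  refine exists_isReducedAt_of_mem hα (I.mul_mem_right (monomial γ 1) hfcI) ?_
    fun β hβ hβδ hne => ih β (hlt β hβ hne) hβδ
  rw [coeff_mul_monomial, mul_one, (hf c hc).1]

theorem stmt5 {R : Type*} [CommRing R] {n : ℕ} (mo : MonOrd n)
    (δ : Set (Fin n →₀ ℕ)) (hstd : StdSet δ) (hfin : δ.Finite)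
    (f : (Fin n →₀ ℕ) → MvPolynomial (Fin n) R)
    (hf : ∀ α, StdCorner δ α → (f α).coeff α = 1 ∧
      ∀ β ∈ (f α).support, β ≠ α → β ∈ δ ∧ mo.lt β α)
    (I : Ideal (MvPolynomial (Fin n) R))
    (hI : I = Ideal.span {p | ∃ α, StdCorner δ α ∧ p = f α}) :
    ∀ α ∉ δ, ∃ g ∈ I, (g : MvPolynomial (Fin n) R).coeff α = 1 ∧
      ∀ β ∈ (g : MvPolynomial (Fin n) R).support, β ≠ α → β ∈ δ :=
  stmt5_general mo δ f hf I hI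
end

section
/- Let R be a commutative ring, δ ⊆ ℕ^n a finite standard set, ≺ a monomial order, and I ⊆ R[x] an ideal generated by monic polynomials f_α (α ∈ 𝒞(δ)) with leading exponent α and non-leading exponents in δ. If the set of leading exponents of nonzero elements of I equals ℕ^n \ δ, then the family (f_α)_{α ∈ ℕ^n \ δ} from the extension of Lemma (i) (the unique elements of I with leading exponent α and all non-leading exponents in δ) is an R-module basis of I. -/
/-
The family is unitriangular against the monomials outside δ: the coefficient of `x^α` (α ∉ δ)
in `∑ c_β g_β` is exactly `c_α`, which gives linear independence. For spanning, subtract from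
`p ∈ I` the combination `∑_{β ∉ δ} p_β g_β`; the difference lies in `I` and has no exponent
outside δ, so it has no leading exponent and hence vanishes.
-/

open MvPolynomial Finset

theorem MonOrd.exists_max {n : ℕ} (mo : MonOrd n) {s : Finset (Fin n →₀ ℕ)} (hs : s.Nonempty) :
    ∃ α ∈ s, ∀ β ∈ s, β ≠ α → mo.lt β α := by
  classical
  induction s using Finset.induction_on with
  | empty => simp at hs
  | insert a s ha ih =>
    rcases s.eq_empty_or_nonempty with rfl | hs
    · exact ⟨a, mem_singleton_self a, fun β hβ hne => absurd (mem_singleton.1 hβ) hne⟩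
    obtain ⟨α, hα, hmax⟩ := ih hs
    rcases mo.lt_total a α with h | rfl | h
    · refine ⟨α, mem_insert_of_mem hα, fun β hβ hne => ?_⟩
      rcases mem_insert.1 hβ with rfl | hβ
      exacts [h, hmax β hβ hne]
    · exact absurd hα ha
    · refine ⟨a, mem_insert_self a s, fun β hβ hne => ?_⟩
      rcases mem_insert.1 hβ with rfl | hβ
      · exact absurd rfl hne
      rcases eq_or_ne β α with rfl | hβα
      exacts [h, mo.lt_trans (hmax β hβ hβα) h]

theorem MonOrd.exists_isLeadingExp {R : Type*} [CommRing R] {n : ℕ} (mo : MonOrd n)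
    {p : MvPolynomial (Fin n) R} (hp : p ≠ 0) : ∃ α, IsLeadingExp mo p α := by
  obtain ⟨α, hα, hmax⟩ := mo.exists_max (support_nonempty.2 hp)
  exact ⟨α, mem_support_iff.1 hα, hmax⟩

theorem eq_zero_of_mem_of_coeff_notMem_eq_zero {R : Type*} [CommRing R] {n : ℕ} {mo : MonOrd n}
    {δ : Set (Fin n →₀ ℕ)} {I : Ideal (MvPolynomial (Fin n) R)}
    (hLE : ∀ α, (∃ p ∈ I, p ≠ 0 ∧ IsLeadingExp mo p α) → α ∉ δ) {p : MvPolynomial (Fin n) R}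
    (hp : p ∈ I) (hcoeff : ∀ α ∉ δ, p.coeff α = 0) : p = 0 := by
  by_contra hp0
  obtain ⟨α, hα⟩ := mo.exists_isLeadingExp hp0
  exact hα.1 (hcoeff α (hLE α ⟨p, hp, hp0, hα⟩))

def IsReducedMonic {R : Type*} [CommRing R] {σ : Type*} (δ : Set (σ →₀ ℕ)) (α : σ →₀ ℕ)
    (q : MvPolynomial σ R) : Prop :=
  q.coeff α = 1 ∧ ∀ β ∈ q.support, β ≠ α → β ∈ δ

section
variable {R σ : Type*} [CommRing R] {δ : Set (σ →₀ ℕ)}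

theorem IsReducedMonic.coeff_eq_zero {α β : σ →₀ ℕ} {q : MvPolynomial σ R}
    (hq : IsReducedMonic δ β q) (hα : α ∉ δ) (hne : α ≠ β) : q.coeff α = 0 :=
  notMem_support_iff.1 fun hmem => hα (hq.2 α hmem hne)

variable {g : (σ →₀ ℕ) → MvPolynomial σ R} (hg : ∀ β ∉ δ, IsReducedMonic δ β (g β))
include hg

theorem coeff_linearCombination_of_notMem (c : {β // β ∉ δ} →₀ R) {α : σ →₀ ℕ} (hα : α ∉ δ) :
    (Finsupp.linearCombination R (fun β : {β // β ∉ δ} => g β) c).coeff α = c ⟨α, hα⟩ := by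
  rw [Finsupp.linearCombination_apply, Finsupp.sum, coeff_sum]
  simp_rw [coeff_smul]
  rw [Finset.sum_eq_single ⟨α, hα⟩, (hg α hα).1, smul_eq_mul, mul_one]
  · intro β _ hβ
    rw [(hg β β.2).coeff_eq_zero hα (fun h => hβ (Subtype.ext h.symm)), smul_zero]
  · intro hα'
    rw [Finsupp.notMem_support_iff.1 hα', zero_smul]

theorem linearIndependent_of_isReducedMonic :
    LinearIndependent R (fun β : {β // β ∉ δ} => g β) :=
  linearIndependent_iff.2 fun c hc => Finsupp.ext fun β => by
    simpa [coeff_linearCombination_of_notMem hg c β.2] using congr_arg (coeff β.1) hc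

end

theorem span_range_eq_restrictScalars_of_isReducedMonic {R : Type*} [CommRing R] {n : ℕ} {mo : MonOrd n}
    {δ : Set (Fin n →₀ ℕ)} {I : Ideal (MvPolynomial (Fin n) R)}
    (hLE : ∀ α, (∃ p ∈ I, p ≠ 0 ∧ IsLeadingExp mo p α) → α ∉ δ)
    {g : (Fin n →₀ ℕ) → MvPolynomial (Fin n) R} (hgI : ∀ β ∉ δ, g β ∈ I)
    (hg : ∀ β ∉ δ, IsReducedMonic δ β (g β)) :
    Submodule.span R (Set.range fun β : {β // β ∉ δ} => g β) = I.restrictScalars R := by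
  have hspan_le : Submodule.span R (Set.range fun β : {β // β ∉ δ} => g β) ≤ I.restrictScalars R :=
    Submodule.span_le.2 <| Set.range_subset_iff.2 fun β => hgI β β.2
  refine le_antisymm hspan_le fun p hp => ?_
  set c : {β // β ∉ δ} →₀ R := Finsupp.ofSupportFinite (fun β => p.coeff β) <|
    (p.support.finite_toSet.preimage Subtype.val_injective.injOn).subset fun β hβ => by
      simpa using hβ
  have hc : Finsupp.linearCombination R (fun β : {β // β ∉ δ} => g β) c ∈
      Submodule.span R (Set.range fun β : {β // β ∉ δ} => g β) :=
    Finsupp.mem_span_range_iff_exists_finsupp.2 ⟨c, rfl⟩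
  suffices p = Finsupp.linearCombination R (fun β : {β // β ∉ δ} => g β) c from this ▸ hc
  rw [← sub_eq_zero]
  refine eq_zero_of_mem_of_coeff_notMem_eq_zero hLE (I.sub_mem hp (hspan_le hc)) fun α hα => ?_
  rw [coeff_sub, coeff_linearCombination_of_notMem hg c hα, sub_eq_zero]
  rfl

theorem stmt7_general {R : Type*} [CommRing R] {n : ℕ} (mo : MonOrd n)
    (δ : Set (Fin n →₀ ℕ))
    (I : Ideal (MvPolynomial (Fin n) R))
    (hLE : ∀ α : Fin n →₀ ℕ, (∃ g ∈ I, g ≠ 0 ∧ IsLeadingExp mo g α) ↔ α ∉ δ)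
    (g : (Fin n →₀ ℕ) → MvPolynomial (Fin n) R)
    (hg : ∀ α ∉ δ, g α ∈ I ∧ (g α).coeff α = 1 ∧
      ∀ β ∈ (g α).support, β ≠ α → β ∈ δ ∧ mo.lt β α) :
    ∃ b : Module.Basis {α : Fin n →₀ ℕ // α ∉ δ} R (Submodule.restrictScalars R I),
      ∀ α : {α : Fin n →₀ ℕ // α ∉ δ}, (b α : MvPolynomial (Fin n) R) = g α.1 := by
  have hred : ∀ α ∉ δ, IsReducedMonic δ α (g α) := fun α hα =>
    ⟨(hg α hα).2.1, fun β hβ hne => ((hg α hα).2.2 β hβ hne).1⟩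
  have hspan := span_range_eq_restrictScalars_of_isReducedMonic (fun α => (hLE α).1) (fun α hα => (hg α hα).1) hred
  exact ⟨(Module.Basis.span (linearIndependent_of_isReducedMonic hred)).map
    (LinearEquiv.ofEq _ _ hspan), fun α => by simp [Module.Basis.span_apply]⟩

theorem stmt7 {R : Type*} [CommRing R] {n : ℕ} (mo : MonOrd n)
    (δ : Set (Fin n →₀ ℕ)) (hstd : StdSet δ) (hfin : δ.Finite)
    (f : (Fin n →₀ ℕ) → MvPolynomial (Fin n) R)
    (hf : ∀ α, StdCorner δ α → (f α).coeff α = 1 ∧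
      ∀ β ∈ (f α).support, β ≠ α → β ∈ δ ∧ mo.lt β α)
    (I : Ideal (MvPolynomial (Fin n) R))
    (hI : I = Ideal.span {p | ∃ α, StdCorner δ α ∧ p = f α})
    (hLE : ∀ α : Fin n →₀ ℕ, (∃ g ∈ I, g ≠ 0 ∧ IsLeadingExp mo g α) ↔ α ∉ δ)
    (g : (Fin n →₀ ℕ) → MvPolynomial (Fin n) R)
    (hg : ∀ α ∉ δ, g α ∈ I ∧ (g α).coeff α = 1 ∧
      ∀ β ∈ (g α).support, β ≠ α → β ∈ δ ∧ mo.lt β α) :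
    ∃ b : Module.Basis {α : Fin n →₀ ℕ // α ∉ δ} R (Submodule.restrictScalars R I),
      ∀ α : {α : Fin n →₀ ℕ // α ∉ δ}, (b α : MvPolynomial (Fin n) R) = g α.1 :=
  stmt7_general mo δ I hLE g hg
end
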